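/- Fix a constant C ≥ 1/2 and a real M > 0. Define, for ε > max(0, ln(2C)/M), the function G(ε) = (M − ln(2C)/ε) + (1/ε)·(2C·e^{−εM} − 1). Then G is strictly increasing in ε on the interval (max(0, ln(2C)/M), ∞). That is, for a fixed step count M beyond the switching threshold, increasing the decay rate ε strictly increases the expected cumulative progress toward the LTL goal. -/

import Mathlib

/-- Key inequality: for `a ≥ 1` and `t > log a`, `a(1+t)e^{-t} < 1 + log a`. -/
lemma key_ineq (a t : ℝ) (ha : 1 ≤ a) (ht : Real.log a < t) :
    a * (1 + t) * Real.exp (-t) < 1 + Real.log a := by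
  have ha0 : 0 < a := lt_of_lt_of_le one_pos ha
  have hL : 0 ≤ Real.log a := Real.log_nonneg ha
  have hne : t - Real.log a ≠ 0 := sub_ne_zero.mpr (ne_of_gt ht)
  have h1 : (t - Real.log a) + 1 < Real.exp (t - Real.log a) := Real.add_one_lt_exp hne
  have hexp : Real.exp (t - Real.log a) = Real.exp t / a := by
    rw [Real.exp_sub, Real.exp_log ha0]
  rw [hexp] at h1
  -- a * (1 + t - log a) < exp t
  have h2 : a * ((t - Real.log a) + 1) < Real.exp t := by
    rw [← lt_div_iff₀' ha0]; exact h1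
  have h3 : a * Real.log a ≤ Real.log a * Real.exp t := by
    have : a ≤ Real.exp t := by
      calc a = Real.exp (Real.log a) := (Real.exp_log ha0).symm
        _ ≤ Real.exp t := Real.exp_le_exp.mpr ht.le
    nlinarith
  have h4 : a * (1 + t) < (1 + Real.log a) * Real.exp t := by nlinarith
  rw [Real.exp_neg, mul_inv_lt_iff₀ (Real.exp_pos t)]
  linarith [h4]

lemma hasDerivG (C M x : ℝ) (hx : x ≠ 0) :
    HasDerivAt (fun ε : ℝ => (M - Real.log (2 * C) / ε) + (1 / ε) * (2 * C * Real.exp (-(ε * M)) - 1))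
      ((Real.log (2 * C) + 1 - 2 * C * Real.exp (-(x * M)) * (1 + x * M)) / x ^ 2) x := by
  have hinv : HasDerivAt (fun ε : ℝ => ε⁻¹) (-(x ^ 2)⁻¹) x := hasDerivAt_inv hx
  have he : HasDerivAt (fun ε : ℝ => 2 * C * Real.exp (-(ε * M)) - 1)
      (2 * C * (Real.exp (-(x * M)) * -(1 * M))) x :=
    ((((hasDerivAt_id x).mul_const M).neg.exp).const_mul (2 * C)).sub_const 1
  have h1 : HasDerivAt (fun ε : ℝ => M - Real.log (2 * C) * ε⁻¹)
      (0 - Real.log (2 * C) * -(x ^ 2)⁻¹) x :=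
    (hasDerivAt_const x M).sub (hinv.const_mul (Real.log (2 * C)))
  have h2 := h1.add (hinv.mul he)
  have hfun : (fun ε : ℝ => (M - Real.log (2 * C) / ε) + (1 / ε) * (2 * C * Real.exp (-(ε * M)) - 1))
      = fun ε : ℝ => (M - Real.log (2 * C) * ε⁻¹) + ε⁻¹ * (2 * C * Real.exp (-(ε * M)) - 1) := by
    funext ε; rw [div_eq_mul_inv, one_div]
  rw [hfun]
  refine h2.congr_deriv ?_
  field_simp
  ring

/-- For `C ≥ 1/2` and `M > 0`, the expected-progress function
`G(ε) = (M − ln(2C)/ε) + (1/ε)·(2C·e^{−εM} − 1)` is strictly increasing in `ε`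
on the interval `(max 0 (ln(2C)/M), ∞)`. -/
theorem progress_strict_mono_in_eps (C M : ℝ) (hC : 1/2 ≤ C) (hM : 0 < M) :
    StrictMonoOn
      (fun ε : ℝ => (M - Real.log (2 * C) / ε) + (1 / ε) * (2 * C * Real.exp (-(ε * M)) - 1))
      (Set.Ioi (max 0 (Real.log (2 * C) / M))) := by
  have hC2 : (1:ℝ) ≤ 2 * C := by linarith
  apply strictMonoOn_of_deriv_pos (convex_Ioi _)
  · intro x hx
    have hx0 : 0 < x := lt_of_le_of_lt (le_max_left _ _) hx
    exact (hasDerivG C M x hx0.ne').continuousAt.continuousWithinAt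
  · intro x hx
    rw [interior_Ioi] at hx
    have hx0 : 0 < x := lt_of_le_of_lt (le_max_left _ _) hx
    rw [(hasDerivG C M x hx0.ne').deriv]
    apply div_pos _ (by positivity)
    have ht : Real.log (2 * C) < x * M := by
      have h := lt_of_le_of_lt (le_max_right 0 (Real.log (2 * C) / M)) hx
      calc Real.log (2 * C) = (Real.log (2 * C) / M) * M := by field_simp
        _ < x * M := by exact mul_lt_mul_of_pos_right h hM
    have := key_ineq (2 * C) (x * M) hC2 ht
    nlinarith [this]
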